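/- If E is not a parent of Y, MI is nonempty, and m satisfies m_min ≤ m ≤ d, then S_AS^m is invariant, i.e., E and Y are d-separated given S_AS^m. -/

import Mathlib

/-- Nodes of the graph: the environment node `E`, predictor nodes `V j` for
`j ∈ {1, …, d}` (represented by `Fin d`), and the response node `Y`. -/
inductive Node (d : ℕ) : Type where
  | E : Node d
  | V : Fin d → Node d
  | Y : Node d
deriving DecidableEq

/-- A directed acyclic graph on `{E} ∪ {1, …, d} ∪ {Y}` in which `E` has no
parents (`E` is exogenous). -/
structure CGraph (d : ℕ) where
  adj : Node d → Node d → Prop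
  acyclic : ∀ v, ¬ Relation.TransGen adj v v
  exogenous : ∀ v, ¬ adj v Node.E

namespace CGraph

variable {d : ℕ} (G : CGraph d)

/-- Undirected adjacency: an edge between `u` and `v` in either direction. -/
def Edge (u v : Node d) : Prop := G.adj u v ∨ G.adj v u

/-- `p` is a path between `a` and `b`: a duplicate-free list of nodes starting
at `a`, ending at `b`, with consecutive nodes adjacent (in either direction). -/
def IsPath (p : List (Node d)) (a b : Node d) : Prop :=
  p.head? = some a ∧ p.getLast? = some b ∧ p.Nodup ∧ p.Chain' G.Edge

/-- `x` is a (strict) descendant of `v`. -/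
def Desc (v x : Node d) : Prop := Relation.TransGen G.adj v x

/-- The consecutive triple `u, m, w` on a path blocks the path given `C`:
either `m` is a non-collider lying in `C`, or `m` is a collider such that
neither `m` nor any of its descendants lies in `C`. -/
def BlockedAt (C : Set (Node d)) (u m w : Node d) : Prop :=
  (¬ (G.adj u m ∧ G.adj w m) ∧ m ∈ C) ∨
  ((G.adj u m ∧ G.adj w m) ∧ m ∉ C ∧ ∀ x, G.Desc m x → x ∉ C)

/-- A path `p` is blocked by `C` if some consecutive triple on it blocks it. -/
def Blocked (C : Set (Node d)) (p : List (Node d)) : Prop :=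
  ∃ q u m w r, p = q ++ u :: m :: w :: r ∧ G.BlockedAt C u m w

/-- `a` and `b` are d-separated given `C`: every path between them is blocked. -/
def DSep (a b : Node d) (C : Set (Node d)) : Prop :=
  ∀ p, G.IsPath p a b → G.Blocked C p

/-- `S ⊆ {1, …, d}` is invariant if `E` and `Y` are d-separated given `S`. -/
def Invariant (S : Set (Fin d)) : Prop := G.DSep Node.E Node.Y (Node.V '' S)

/-- `S` is minimally invariant if it is invariant and no strict subset of `S`
is invariant. -/
def MinInvariant (S : Set (Fin d)) : Prop :=
  G.Invariant S ∧ ∀ S', S' ⊂ S → ¬ G.Invariant S'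

/-- `S_AS`: the union of all minimally invariant sets. -/
def SAS : Set (Fin d) := ⋃₀ {S | G.MinInvariant S}

/-- `S_ICP`: the intersection of all invariant sets (`∅` if there are none). -/
def SICP : Set (Fin d) :=
  {j | (∃ S, G.Invariant S) ∧ ∀ S, G.Invariant S → j ∈ S}

/-- `S_AS^m`: the union of all minimally invariant sets of cardinality `≤ m`. -/
def SASm (m : ℕ) : Set (Fin d) := ⋃₀ {S | G.MinInvariant S ∧ S.ncard ≤ m}

/-- The parents of `Y` among `{1, …, d}`. -/
def paY : Set (Fin d) := {j | G.adj (Node.V j) Node.Y}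

/-- The children of `E` among `{1, …, d}`. -/
def chE : Set (Fin d) := {j | G.adj Node.E (Node.V j)}

/-- The ancestors of `Y` among `{1, …, d}`. -/
def anY : Set (Fin d) := {j | Relation.TransGen G.adj (Node.V j) Node.Y}

/-- `PA(A)`: the union of the parent sets of the elements of `A ⊆ {1, …, d}`. -/
def paOf (A : Set (Fin d)) : Set (Fin d) := {j | ∃ i ∈ A, G.adj (Node.V j) (Node.V i)}

end CGraph

/-! If `m` is a non-collider on a path that is not an ancestor of `Y`, following the path in the
direction of an edge out of `m` must eventually hit a collider, because neither endpoint can be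
reached by a directed path from `m` (`E` has no parents). That collider and its descendants are
not ancestors of `Y`, so every minimally invariant set consists of ancestors of `Y`.

Conversely, adding ancestors of `Y` to an invariant set `S` keeps it invariant. On a path left
open by the enlarged set, the first triple blocking it given `S` is a collider `c` that is an
ancestor of `Y`, while neither `c` nor its descendants lie in `S`. Leaving the path at its first
node on a directed path from `c` to `Y` and following that directed path gives a path with no
`S`-blocking triple before the junction, and no collider and no node of `S` from it on.

Hence `S_AS^m` is the union of a minimally invariant set of minimal size with ancestors of `Y`. -/

open Relation

namespace List

variable {α : Type*}

theorem exists_eq_append_cons_of_exists_mem {P : α → Prop} {l : List α} (h : ∃ x ∈ l, P x) :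
    ∃ a z b, l = a ++ z :: b ∧ P z ∧ ∀ x ∈ a, ¬ P x := by
  induction l with
  | nil => simp at h
  | cons y l ih =>
    by_cases hy : P y
    · exact ⟨[], y, l, rfl, hy, by simp⟩
    · obtain ⟨a, z, b, rfl, hz, ha⟩ := ih (by simpa [hy] using h)
      exact ⟨y :: a, z, b, rfl, hz, by simpa [hy] using ha⟩

theorem exists_collider_of_isChain {r : α → α → Prop} {t : α} :
    ∀ {a b : α} {l : List α}, (a :: b :: l).IsChain (fun x y => r x y ∨ r y x) → r a b →
      (a :: b :: l).getLast? = some t → ¬ TransGen r a t →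
      ∃ q u c w s, a :: b :: l = q ++ u :: c :: w :: s ∧ r u c ∧ r w c ∧ TransGen r a c
  | a, b, [], _, hab, hlast, ht => by
    simp only [getLast?_cons_cons, getLast?_singleton, Option.some.injEq] at hlast
    exact absurd (.single (hlast ▸ hab)) ht
  | a, b, b' :: l, hchain, hab, hlast, ht => by
    by_cases hcol : r b' b
    · exact ⟨[], a, b, b', l, rfl, hab, hcol, .single hab⟩
    · have hchain' := hchain.tail
      obtain ⟨q, u, c, w, s, e, huc, hwc, hbc⟩ :=
        exists_collider_of_isChain hchain' (hchain'.rel.resolve_right hcol)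
          (by simpa using hlast) fun hbt => ht (.head hab hbt)
      exact ⟨a :: q, u, c, w, s, by rw [e]; rfl, huc, hwc, .head hab hbc⟩

end List

namespace CGraph

variable {d : ℕ} {G : CGraph d}

theorem not_transGen_E (G : CGraph d) (v : Node d) : ¬ TransGen G.adj v Node.E := by
  rintro (h | ⟨_, h⟩) <;> exact G.exogenous _ h

theorem nodup_of_isChain {l : List (Node d)} (h : l.IsChain G.adj) : l.Nodup := by
  refine (h.imp fun _ _ => TransGen.single).pairwise.imp ?_
  rintro x _ hx rfl
  exact G.acyclic x hx

theorem exists_first_blocked {C : Set (Node d)} {p : List (Node d)} (h : G.Blocked C p) :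
    ∃ q u m w r, p = q ++ u :: m :: w :: r ∧ G.BlockedAt C u m w ∧
      ¬ G.Blocked C (q ++ [u, m]) := by
  obtain ⟨q, u, m, w, r, hp, hb⟩ := h
  induction hn : q.length using Nat.strong_induction_on generalizing q u m w r with
  | _ n ih =>
    by_cases hq : G.Blocked C (q ++ [u, m])
    · obtain ⟨q', u', m', w', r', e, hb'⟩ := hq
      have hlen : q'.length < n := by
        have := congrArg List.length e
        simp only [List.length_append, List.length_cons, List.length_nil] at this
        omega
      refine ih _ hlen q' u' m' w' (r' ++ w :: r) ?_ hb' rfl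
      rw [hp, show q ++ u :: m :: w :: r = q ++ [u, m] ++ w :: r by simp, e]
      simp
    · exact ⟨q, u, m, w, r, hp, hb, hq⟩

theorem Blocked.append_right {C : Set (Node d)} {l₁ : List (Node d)} (h : G.Blocked C l₁)
    (l₂ : List (Node d)) : G.Blocked C (l₁ ++ l₂) := by
  obtain ⟨q, u, m, w, r, rfl, hb⟩ := h
  exact ⟨q, u, m, w, r ++ l₂, by simp, hb⟩

theorem blocked_append_cons {C : Set (Node d)} {a b : List (Node d)} {z : Node d}
    (h : G.Blocked C (a ++ z :: b)) :
    G.Blocked C (a ++ [z]) ∨ ∃ x y w s r, z :: b = s ++ y :: w :: r ∧ G.BlockedAt C x y w := by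
  obtain ⟨q, x, y, w, r, e, hb⟩ := h
  rcases List.append_eq_append_iff.mp e with ⟨s, rfl, e'⟩ | ⟨s, rfl, e'⟩
  · exact Or.inr ⟨x, y, w, s ++ [x], r, by simp [e'], hb⟩
  · rcases s with _ | ⟨x', _ | ⟨y', _ | ⟨w', s⟩⟩⟩ <;>
      simp only [List.nil_append, List.cons_append, List.cons.injEq] at e'
    · obtain ⟨rfl, rfl⟩ := e'
      exact Or.inr ⟨x, y, w, [x], r, rfl, hb⟩
    · obtain ⟨rfl, rfl, rfl⟩ := e'
      exact Or.inr ⟨x, y, w, [], r, rfl, hb⟩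
    · obtain ⟨rfl, rfl, rfl, rfl⟩ := e'
      exact Or.inl ⟨q, x, y, w, [], by simp, hb⟩
    · obtain ⟨rfl, rfl, rfl, rfl⟩ := e'
      exact Or.inl ⟨q, x, y, w, s ++ [z], by simp, hb⟩

theorem blocked_append_directed {C : Set (Node d)} {a π : List (Node d)} {z : Node d}
    (hπ : (z :: π).IsChain G.adj) (h : G.Blocked C (a ++ z :: π)) :
    G.Blocked C (a ++ [z]) ∨ ∃ y ∈ z :: π, y ∈ C := by
  refine (blocked_append_cons h).imp_right ?_
  rintro ⟨x, y, w, s, r, e, hb⟩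
  have hyw : G.adj y w := (e ▸ hπ).right_of_append.rel
  refine ⟨y, by simp [e], ?_⟩
  rcases hb with ⟨-, hy⟩ | ⟨⟨-, hwy⟩, -⟩
  · exact hy
  · exact (G.acyclic y ((TransGen.single hyw).tail hwy)).elim

theorem IsPath.append_directed {s t z : Node d} {a b π : List (Node d)}
    (hp : G.IsPath (a ++ z :: b) s t) (hπ : (z :: π).IsChain G.adj)
    (hlast : (z :: π).getLast? = some t) (hdisj : ∀ x ∈ a, x ∉ z :: π) :
    G.IsPath (a ++ z :: π) s t := by
  obtain ⟨hhead, -, hnodup, hchain⟩ := hp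
  refine ⟨by simpa [List.head?_append] using hhead, by simp [List.getLast?_append, hlast], ?_, ?_⟩
  · exact List.nodup_append.mpr ⟨(List.nodup_append.mp hnodup).1, nodup_of_isChain hπ,
      fun x hx y hy hxy => hdisj x hx (hxy ▸ hy)⟩
  · have hpre : (a ++ [z]).IsChain G.Edge := hchain.prefix ⟨b, by simp⟩
    have hπ' : (z :: π).IsChain G.Edge := hπ.imp fun _ _ => Or.inl
    exact (by simpa using hpre.append_overlap (l₃ := π) (by simpa using hπ') (by simp) :
      (a ++ z :: π).IsChain G.Edge)

theorem exists_collider_transGen_of_not_collider {p q r : List (Node d)} {u m w : Node d}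
    (hp : G.IsPath p Node.E Node.Y) (hpq : p = q ++ u :: m :: w :: r)
    (hnc : ¬ (G.adj u m ∧ G.adj w m)) (hmY : ¬ TransGen G.adj m Node.Y) :
    ∃ q' u' c w' r', p = q' ++ u' :: c :: w' :: r' ∧ G.adj u' c ∧ G.adj w' c ∧
      TransGen G.adj m c := by
  obtain ⟨hhead, hlast, -, hchain⟩ := hp
  subst hpq
  have hsuffix : (m :: w :: r).IsChain G.Edge := hchain.right_of_append.tail
  have hprefix : (q ++ [u, m]).IsChain G.Edge := hchain.prefix ⟨w :: r, by simp⟩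
  rcases hsuffix.rel with hmw | hwm
  · obtain ⟨q', u', c, w', r', e, huc, hwc, hmc⟩ :=
      List.exists_collider_of_isChain hsuffix hmw
        (by simpa [List.getLast?_append] using hlast) hmY
    exact ⟨q ++ u :: q', u', c, w', r', by simp [e], huc, hwc, hmc⟩
  · have hmu : G.adj m u := by
      exact (hchain.right_of_append.rel : G.Edge u m).resolve_left fun hum => hnc ⟨hum, hwm⟩
    have hrev : (m :: u :: q.reverse).IsChain G.Edge := by
      have : (q ++ [u, m]).IsChain fun a b => G.Edge b a := hprefix.imp fun _ _ => Or.symm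
      simpa using List.isChain_reverse.mpr this
    obtain ⟨q', u', c, w', r', e, huc, hwc, hmc⟩ :=
      List.exists_collider_of_isChain hrev hmu
        (by simpa [List.getLast?_cons, List.head?_append] using hhead) (G.not_transGen_E m)
    refine ⟨r'.reverse, w', c, u', q'.reverse ++ w :: r, ?_, hwc, huc, hmc⟩
    calc q ++ u :: m :: w :: r = (m :: u :: q.reverse).reverse ++ w :: r := by simp
      _ = _ := by rw [e]; simp

theorem Invariant.inter_anY {S : Set (Fin d)} (hS : G.Invariant S) :
    G.Invariant (S ∩ G.anY) := by
  intro p hp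
  obtain ⟨q, u, m, w, r, hpq, hb⟩ := hS p hp
  have hsub : Node.V '' (S ∩ G.anY) ⊆ Node.V '' S := Set.image_mono Set.inter_subset_left
  rcases hb with ⟨hnc, j, hjS, rfl⟩ | ⟨hcol, hm, hdesc⟩
  · by_cases hj : j ∈ G.anY
    · exact ⟨q, u, _, w, r, hpq, Or.inl ⟨hnc, j, ⟨hjS, hj⟩, rfl⟩⟩
    have hout : ∀ x, TransGen G.adj (Node.V j) x → x ∉ Node.V '' (S ∩ G.anY) := by
      rintro x hx ⟨i, hi, rfl⟩
      exact hj (hx.trans hi.2)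
    obtain ⟨q', u', c, w', r', hpq', huc, hwc, hjc⟩ :=
      exists_collider_transGen_of_not_collider hp hpq hnc hj
    exact ⟨q', u', c, w', r', hpq',
      Or.inr ⟨⟨huc, hwc⟩, hout c hjc, fun x hx => hout x (hjc.trans hx)⟩⟩
  · exact ⟨q, u, m, w, r, hpq,
      Or.inr ⟨hcol, fun h => hm (hsub h), fun x hx h => hdesc x hx (hsub h)⟩⟩

theorem MinInvariant.subset_anY {S : Set (Fin d)} (hS : G.MinInvariant S) : S ⊆ G.anY := by
  by_contra hSY
  exact hS.2 _ ⟨Set.inter_subset_left, fun h => hSY fun _ hx => (h hx).2⟩ hS.1.inter_anY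

theorem BlockedAt.union_of_not_transGen_Y {S T : Set (Fin d)} {u m w : Node d}
    (h : G.BlockedAt (Node.V '' S) u m w) (hT : T ⊆ G.anY) (hmY : ¬ TransGen G.adj m Node.Y) :
    G.BlockedAt (Node.V '' (S ∪ T)) u m w := by
  have hT' : ∀ x, ReflTransGen G.adj m x → x ∉ Node.V '' T := by
    rintro x hx ⟨i, hi, rfl⟩
    exact hmY (TransGen.trans_right hx (hT hi))
  rw [Set.image_union]
  rcases h with ⟨hnc, hm⟩ | ⟨hcol, hm, hdesc⟩
  · exact Or.inl ⟨hnc, Or.inl hm⟩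
  · exact Or.inr ⟨hcol, fun h => h.elim hm (hT' m .refl),
      fun x hx h => h.elim (hdesc x hx) (hT' x hx.to_reflTransGen)⟩

theorem IsPath.exists_reroute_directed {s t c : Node d} {q r : List (Node d)}
    (hp : G.IsPath (q ++ c :: r) s t) (hct : ReflTransGen G.adj c t) :
    ∃ a z b π, q ++ [c] = a ++ z :: b ∧ (z :: π).IsChain G.adj ∧
      (∀ y ∈ z :: π, ReflTransGen G.adj c y) ∧ G.IsPath (a ++ z :: π) s t := by
  obtain ⟨π₀, hπ₀, hlast₀⟩ := List.exists_isChain_cons_of_relationReflTransGen hct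
  obtain ⟨a, z, b, hsplit, hz, ha⟩ :=
    List.exists_eq_append_cons_of_exists_mem (l := q ++ [c]) (P := (· ∈ c :: π₀))
      ⟨c, by simp, by simp⟩
  obtain ⟨s', π, hπsplit⟩ := List.append_of_mem hz
  have hπ : (z :: π).IsChain G.adj := (hπsplit ▸ hπ₀).right_of_append
  have hpsplit : q ++ c :: r = a ++ z :: (b ++ r) := by
    simpa using congrArg (· ++ r) hsplit
  refine ⟨a, z, b, π, hsplit, hπ, fun y hy => ?_, ?_⟩
  · exact List.IsChain.induction (ReflTransGen G.adj c ·) _ hπ₀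
      (fun _ _ hxy h => h.tail hxy) (fun _ => .refl) y (by simp [hπsplit, hy])
  refine IsPath.append_directed (hpsplit ▸ hp) hπ ?_ ?_
  · rw [List.getLast?_eq_some_getLast (List.cons_ne_nil z π), Option.some_inj]
    simpa [hπsplit, List.getLast_append] using hlast₀
  · exact fun x hx hxπ => ha x hx (by simp [hπsplit, hxπ])

theorem Invariant.union_of_subset_anY {S T : Set (Fin d)} (hS : G.Invariant S)
    (hT : T ⊆ G.anY) : G.Invariant (S ∪ T) := by
  intro p hp
  by_contra hopen
  obtain ⟨q, u, c, w, r, rfl, hblk, hfirst⟩ := exists_first_blocked (hS _ hp)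
  have hcY : TransGen G.adj c Node.Y := by
    by_contra hcY
    exact hopen ⟨q, u, c, w, r, rfl, hblk.union_of_not_transGen_Y hT hcY⟩
  obtain ⟨-, hcS, hdescS⟩ := hblk.resolve_left fun ⟨hnc, hc⟩ =>
    hopen ⟨q, u, c, w, r, rfl, Or.inl ⟨hnc, Set.image_mono Set.subset_union_left hc⟩⟩
  obtain ⟨a, z, b, π, hsplit, hπ, hcπ, hp'⟩ :=
    IsPath.exists_reroute_directed (q := q ++ [u]) (by simpa using hp) hcY.to_reflTransGen
  rw [List.append_assoc, List.singleton_append] at hsplit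
  rcases blocked_append_directed hπ (hS _ hp') with h | ⟨y, hy, hyS⟩
  · exact hfirst (by simpa [hsplit] using h.append_right b)
  · rcases ReflTransGen.cases_head (hcπ y hy) with rfl | ⟨x, hcx, hxy⟩
    · exact hcS hyS
    · exact hdescS y (TransGen.head' hcx hxy) hyS

end CGraph

theorem SASm_invariant_general {d : ℕ} (G : CGraph d)
    (hne : {S : Set (Fin d) | G.MinInvariant S}.Nonempty)
    (m : ℕ)
    (hmin : sInf {k : ℕ | ∃ S : Set (Fin d), G.MinInvariant S ∧ S.ncard = k} ≤ m) :
    G.Invariant (G.SASm m) := by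
  obtain ⟨S₀, hS₀, hcard⟩ : sInf {k : ℕ | ∃ S : Set (Fin d), G.MinInvariant S ∧ S.ncard = k} ∈
      {k : ℕ | ∃ S : Set (Fin d), G.MinInvariant S ∧ S.ncard = k} :=
    Nat.sInf_mem <| let ⟨S, hS⟩ := hne; ⟨S.ncard, S, hS, rfl⟩
  have hS₀m : S₀ ⊆ G.SASm m := Set.subset_sUnion_of_mem ⟨hS₀, hcard ▸ hmin⟩
  have hanY : G.SASm m ⊆ G.anY := Set.sUnion_subset fun _ hS => hS.1.subset_anY
  simpa [Set.union_eq_self_of_subset_left hS₀m] using hS₀.1.union_of_subset_anY hanY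

/-- if `E` is not a parent of `Y`, `MI` is nonempty and
`m_min ≤ m ≤ d`, then `S_AS^m` is invariant. -/
theorem SASm_invariant {d : ℕ} (G : CGraph d)
    (h : ¬ G.adj Node.E Node.Y)
    (hne : {S : Set (Fin d) | G.MinInvariant S}.Nonempty)
    (m : ℕ)
    (hmin : sInf {k : ℕ | ∃ S : Set (Fin d), G.MinInvariant S ∧ S.ncard = k} ≤ m)
    (hmd : m ≤ d) :
    G.Invariant (G.SASm m) :=
  SASm_invariant_general G hne m hmin
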